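/- Let A be a nonnegative irreducible m×m real matrix (its associated graph is strongly connected) with A ≠ 0, and let u be a nonnegative nonzero vector in ℝ^m. Then lim_{n→∞} (uᵀ Aⁿ 𝟏)^{1/n} = ρ(A), where 𝟏 is the all-ones vector and ρ(A) is the spectral radius of A. -/

import Mathlib

open Matrix Filter

/-- Spectral radius of a real square matrix: the maximum modulus of its complex
eigenvalues, with the convention that the spectral radius of an empty matrix is `0`. -/
noncomputable def specRad {m : Type*} [Fintype m] [DecidableEq m] (A : Matrix m m ℝ) : ℝ :=
  sSup {r : ℝ | r = 0 ∨ ∃ z ∈ (A.map Complex.ofReal).charpoly.roots, ‖z‖ = r}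

/-!
By Gelfand's formula `‖Aⁿ‖^(1/n) → ρ(A)`, and for the `ℓ^∞` operator norm and `A ≥ 0` we have
`‖Aⁿ‖ = ‖Aⁿ 𝟏‖_∞`. So it suffices to squeeze `uᵀ Aⁿ 𝟏` between two positive multiples of
`‖Aⁿ 𝟏‖_∞` independent of `n`; the upper bound is immediate. For the lower one pick `i` with
`u i > 0`. By irreducibility the `i`-th row of `B = ∑_{q<N} A^q` is positive for large `N`, so
`‖Aⁿ 𝟏‖_∞ ≲ (B Aⁿ 𝟏)_i ≲ uᵀ B Aⁿ 𝟏 = uᵀ Aⁿ (B 𝟏) ≤ ‖B 𝟏‖_∞ uᵀ Aⁿ 𝟏`.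
-/

open Topology
open scoped ENNReal

attribute [local instance] Matrix.linftyOpNormedAddCommGroup Matrix.linftyOpNormedRing
  Matrix.linftyOpNormedAlgebra

namespace Matrix

section Norm

variable {m n : Type*} [Fintype m] [Fintype n]

theorem linfty_opNorm_map_ofReal (A : Matrix m n ℝ) : ‖A.map Complex.ofReal‖ = ‖A‖ := by
  simp [linfty_opNorm_def]

theorem linfty_opNorm_eq_norm_mulVec_one {A : Matrix m n ℝ} (hA : ∀ i j, 0 ≤ A i j) :
    ‖A‖ = ‖A *ᵥ 1‖ := by
  rw [linfty_opNorm_def, Pi.norm_def]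
  congr 2
  ext i
  rw [mulVec, dotProduct_one]
  push_cast
  rw [Real.norm_of_nonneg (Finset.sum_nonneg fun j _ => hA i j)]
  exact Finset.sum_congr rfl fun j _ => Real.norm_of_nonneg (hA i j)

end Norm

section Nonneg

variable {m n R : Type*} [Fintype n]

theorem mul_le_dotProduct_of_nonneg [Semiring R] [PartialOrder R] [IsOrderedRing R]
    {u v : n → R} (hu : 0 ≤ u) (hv : 0 ≤ v) (i : n) :
    u i * v i ≤ u ⬝ᵥ v :=
  Finset.single_le_sum (f := fun j => u j * v j) (fun j _ => mul_nonneg (hu j) (hv j))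
    (Finset.mem_univ i)

theorem dotProduct_le_norm_mul_sum {u : n → ℝ} (hu : 0 ≤ u) (v : n → ℝ) :
    u ⬝ᵥ v ≤ ‖v‖ * ∑ i, u i := by
  rw [Finset.mul_sum]
  refine Finset.sum_le_sum fun i _ => ?_
  rw [mul_comm]
  exact mul_le_mul_of_nonneg_right ((le_abs_self (v i)).trans (norm_le_pi_norm v i)) (hu i)

theorem dotProduct_mulVec_le_norm_mul [Fintype m] {u : m → ℝ} {M : Matrix m n ℝ} (hu : 0 ≤ u)
    (hM : ∀ i j, 0 ≤ M i j) (v : n → ℝ) : u ⬝ᵥ (M *ᵥ v) ≤ ‖v‖ * (u ⬝ᵥ (M *ᵥ 1)) := by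
  have huM : 0 ≤ u ᵥ* M := fun j => Finset.sum_nonneg fun i _ => mul_nonneg (hu i) (hM i j)
  simpa only [dotProduct_mulVec, dotProduct_one] using dotProduct_le_norm_mul_sum huM v

theorem mulVec_nonneg [Semiring R] [PartialOrder R] [IsOrderedRing R] {M : Matrix m n R}
    (hM : ∀ i j, 0 ≤ M i j) {v : n → R} (hv : 0 ≤ v) :
    0 ≤ M *ᵥ v :=
  fun i => Finset.sum_nonneg fun j _ => mul_nonneg (hM i j) (hv j)

theorem mul_norm_le_mulVec_apply {B : Matrix m n ℝ} (hB : ∀ i j, 0 ≤ B i j) {r : n → ℝ}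
    (hr : 0 ≤ r) {i : m} {δ : ℝ} (hδ : 0 < δ) (hδB : ∀ k, δ ≤ B i k) :
    δ * ‖r‖ ≤ (B *ᵥ r) i := by
  rw [← le_div_iff₀' hδ, pi_norm_le_iff_of_nonneg (div_nonneg (mulVec_nonneg hB hr i) hδ.le)]
  intro k
  rw [Real.norm_of_nonneg (hr k), le_div_iff₀' hδ]
  calc δ * r k ≤ B i k * r k := mul_le_mul_of_nonneg_right (hδB k) (hr k)
    _ ≤ (B *ᵥ r) i := mul_le_dotProduct_of_nonneg (hB i) hr k

end Nonneg

section Irreducible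

variable {m : Type*} [Fintype m] [DecidableEq m] {A : Matrix m m ℝ}

theorem exists_pow_apply_pos_of_reflTransGen (hA : ∀ i j, 0 ≤ A i j) {i j : m}
    (h : Relation.ReflTransGen (fun a b => 0 < A a b) i j) : ∃ p, 0 < (A ^ p) i j := by
  induction h with
  | refl => exact ⟨0, by simp⟩
  | @tail k l _ hkl ih =>
    obtain ⟨p, hp⟩ := ih
    refine ⟨p + 1, ?_⟩
    rw [pow_succ, mul_apply]
    exact Finset.sum_pos' (fun x _ => mul_nonneg (pow_apply_nonneg hA p i x) (hA x l))
      ⟨k, Finset.mem_univ k, mul_pos hp hkl⟩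

theorem exists_sum_pow_apply_pos (hA : ∀ i j, 0 ≤ A i j)
    (hirr : ∀ i j : m, Relation.ReflTransGen (fun a b => 0 < A a b) i j) (i : m) :
    ∃ N, ∀ j, 0 < (∑ q ∈ Finset.range N, A ^ q) i j := by
  choose p hp using fun j => exists_pow_apply_pos_of_reflTransGen hA (hirr i j)
  refine ⟨Finset.univ.sup p + 1, fun j => ?_⟩
  rw [Matrix.sum_apply]
  exact Finset.sum_pos' (fun q _ => pow_apply_nonneg hA q i j) ⟨p j,
    Finset.mem_range.2 (Nat.lt_succ_of_le (Finset.le_sup (Finset.mem_univ j))), hp j⟩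

theorem exists_pos_mul_norm_pow_le_dotProduct {u : m → ℝ} (hA : ∀ i j, 0 ≤ A i j)
    (hirr : ∀ i j : m, Relation.ReflTransGen (fun a b => 0 < A a b) i j)
    (hu : 0 ≤ u) {i : m} (hi : 0 < u i) :
    ∃ c > 0, ∀ n : ℕ, c * ‖A ^ n‖ ≤ u ⬝ᵥ (A ^ n *ᵥ 1) := by
  obtain ⟨N, hBpos⟩ := exists_sum_pow_apply_pos hA hirr i
  set B := ∑ q ∈ Finset.range N, A ^ q
  have hB : ∀ j k, 0 ≤ B j k := fun j k => by
    simp only [B, Matrix.sum_apply]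
    exact Finset.sum_nonneg fun q _ => pow_apply_nonneg hA q j k
  set δ := Finset.univ.inf' ⟨i, Finset.mem_univ i⟩ (B i)
  have hδ : 0 < δ := (Finset.lt_inf'_iff _).2 fun k _ => hBpos k
  have hδB : ∀ k, δ ≤ B i k := fun k => Finset.inf'_le _ (Finset.mem_univ k)
  set w := B *ᵥ 1
  have hw : 0 < ‖w‖ := calc
    0 < B i i * 1 := by simpa using hBpos i
    _ ≤ w i := mul_le_dotProduct_of_nonneg (hB i) zero_le_one i
    _ ≤ ‖w‖ := (le_abs_self _).trans (norm_le_pi_norm w i)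
  refine ⟨u i * δ / ‖w‖, by positivity, fun n => ?_⟩
  set r := A ^ n *ᵥ 1
  have hr : 0 ≤ r := mulVec_nonneg (pow_apply_nonneg hA n) zero_le_one
  have hcomm : B * A ^ n = A ^ n * B :=
    Commute.sum_left _ _ _ fun q _ => Commute.pow_pow_self A q n
  calc u i * δ / ‖w‖ * ‖A ^ n‖ = u i * (δ * ‖r‖) / ‖w‖ := by
        rw [linfty_opNorm_eq_norm_mulVec_one (pow_apply_nonneg hA n)]; ring
    _ ≤ u i * (B *ᵥ r) i / ‖w‖ := by gcongr; exact mul_norm_le_mulVec_apply hB hr hδ hδB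
    _ ≤ u ⬝ᵥ (B *ᵥ r) / ‖w‖ := by
        gcongr; exact mul_le_dotProduct_of_nonneg hu (mulVec_nonneg hB hr) i
    _ = u ⬝ᵥ (A ^ n *ᵥ w) / ‖w‖ := by simp only [r, w, mulVec_mulVec, hcomm]
    _ ≤ u ⬝ᵥ r := by
        rw [div_le_iff₀ hw, mul_comm]
        exact dotProduct_mulVec_le_norm_mul hu (pow_apply_nonneg hA n) w

end Irreducible

end Matrix

section SpectralRadius

variable {m : Type*} [Fintype m] [DecidableEq m] [Nonempty m]

theorem specRad_eq_toReal_spectralRadius (A : Matrix m m ℝ) :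
    specRad A = (spectralRadius ℂ (A.map Complex.ofReal)).toReal := by
  set M := A.map Complex.ofReal
  have mem_roots_iff (z : ℂ) : z ∈ M.charpoly.roots ↔ z ∈ spectrum ℂ M := by
    rw [Polynomial.mem_roots (charpoly_monic M).ne_zero, mem_spectrum_iff_isRoot_charpoly]
  obtain ⟨k, hk, hρ⟩ := spectrum.exists_nnnorm_eq_spectralRadius_of_nonempty
    (spectrum.nonempty M)
  rw [← hρ, ENNReal.coe_toReal, coe_nnnorm]
  refine IsGreatest.csSup_eq ⟨Or.inr ⟨k, (mem_roots_iff k).2 hk, rfl⟩, ?_⟩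
  rintro r (rfl | ⟨z, hz, rfl⟩)
  · exact norm_nonneg k
  · have hzk : (‖z‖₊ : ℝ≥0∞) ≤ ‖k‖₊ :=
      hρ ▸ le_iSup₂ (f := fun z (_ : z ∈ spectrum ℂ M) => (‖z‖₊ : ℝ≥0∞)) z ((mem_roots_iff z).1 hz)
    exact_mod_cast hzk

theorem tendsto_norm_pow_rpow_specRad (A : Matrix m m ℝ) :
    Tendsto (fun n : ℕ => ‖A ^ n‖ ^ (1 / (n : ℝ))) atTop (𝓝 (specRad A)) := by
  have : CompleteSpace (Matrix m m ℂ) := FiniteDimensional.complete ℂ _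
  set M := A.map Complex.ofReal
  have hρ : spectralRadius ℂ M ≠ ⊤ :=
    ((spectrum.spectralRadius_le_nnnorm M).trans_lt ENNReal.coe_lt_top).ne
  have gelfand := (ENNReal.tendsto_toReal hρ).comp
    (spectrum.pow_nnnorm_pow_one_div_tendsto_nhds_spectralRadius M)
  rw [specRad_eq_toReal_spectralRadius]
  convert gelfand using 2 with n
  rw [Function.comp_apply, ← ENNReal.toReal_rpow, ENNReal.coe_toReal, coe_nnnorm,
    ← linfty_opNorm_map_ofReal]
  exact congrArg (‖·‖ ^ (1 / (n : ℝ))) (map_pow Complex.ofRealHom.mapMatrix A n)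

end SpectralRadius

theorem tendsto_rpow_one_div_of_mul_le_of_le_mul {s t : ℕ → ℝ} {ρ c C : ℝ} (hc : 0 < c)
    (hC : 0 < C) (ht : ∀ n, 0 ≤ t n) (hlow : ∀ n, c * t n ≤ s n) (hup : ∀ n, s n ≤ C * t n)
    (hlim : Tendsto (fun n : ℕ => t n ^ (1 / (n : ℝ))) atTop (𝓝 ρ)) :
    Tendsto (fun n : ℕ => s n ^ (1 / (n : ℝ))) atTop (𝓝 ρ) := by
  have hscaled {a : ℝ} (ha : 0 < a) :
      Tendsto (fun n : ℕ => (a * t n) ^ (1 / (n : ℝ))) atTop (𝓝 ρ) := by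
    have ha1 : Tendsto (fun n : ℕ => a ^ (1 / (n : ℝ))) atTop (𝓝 1) := by
      simpa [Function.comp_def] using ((Real.continuousAt_const_rpow ha.ne').tendsto.comp
        tendsto_one_div_atTop_nhds_zero_nat)
    simpa [Real.mul_rpow ha.le (ht _)] using ha1.mul hlim
  refine tendsto_of_tendsto_of_tendsto_of_le_of_le (hscaled hc) (hscaled hC) (fun n => ?_)
    (fun n => ?_)
  · exact Real.rpow_le_rpow (mul_nonneg hc.le (ht n)) (hlow n) (by positivity)
  · exact Real.rpow_le_rpow ((mul_nonneg hc.le (ht n)).trans (hlow n)) (hup n) (by positivity)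

theorem irreducible_weighted_element_sum_of_matrix_powers_general
    {m : Type*} [Fintype m] [DecidableEq m]
    (A : Matrix m m ℝ) (u : m → ℝ)
    (hA : ∀ i j, 0 ≤ A i j)
    (hirr : ∀ i j : m, Relation.ReflTransGen (fun a b => 0 < A a b) i j)
    (hu : ∀ i, 0 ≤ u i) (hu0 : u ≠ 0) :
    Tendsto (fun n : ℕ => (u ⬝ᵥ ((A ^ n) *ᵥ fun _ => (1 : ℝ))) ^ (1 / (n : ℝ)))
      atTop (nhds (specRad A)) := by
  obtain ⟨i, hi⟩ : ∃ i, 0 < u i := (Pi.lt_def.1 ((show 0 ≤ u from hu).lt_of_ne hu0.symm)).2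
  have : Nonempty m := ⟨i⟩
  have hsum : 0 < ∑ i, u i := Finset.sum_pos' (fun j _ => hu j) ⟨i, Finset.mem_univ i, hi⟩
  obtain ⟨c, hc, hlow⟩ := exists_pos_mul_norm_pow_le_dotProduct hA hirr hu hi
  refine tendsto_rpow_one_div_of_mul_le_of_le_mul hc hsum (fun n => norm_nonneg _) hlow
    (fun n => ?_) (tendsto_norm_pow_rpow_specRad A)
  rw [linfty_opNorm_eq_norm_mulVec_one (pow_apply_nonneg hA n), mul_comm]
  exact dotProduct_le_norm_mul_sum hu _

/-- For a nonnegative irreducible matrix `A ≠ 0` (its associated graph, with an edge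
`i → j` iff `A i j > 0`, is strongly connected) and a nonnegative nonzero vector `u`,
`(uᵀ Aⁿ 𝟏)^(1/n) → ρ(A)` as `n → ∞`. -/
theorem irreducible_weighted_element_sum_of_matrix_powers
    {m : Type*} [Fintype m] [DecidableEq m]
    (A : Matrix m m ℝ) (u : m → ℝ)
    (hA : ∀ i j, 0 ≤ A i j) (hA0 : A ≠ 0)
    (hirr : ∀ i j : m, Relation.ReflTransGen (fun a b => 0 < A a b) i j)
    (hu : ∀ i, 0 ≤ u i) (hu0 : u ≠ 0) :
    Tendsto (fun n : ℕ => (u ⬝ᵥ ((A ^ n) *ᵥ fun _ => (1 : ℝ))) ^ (1 / (n : ℝ)))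
      atTop (nhds (specRad A)) :=
  irreducible_weighted_element_sum_of_matrix_powers_general A u hA hirr hu hu0
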